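/- arXiv:math/0102177 — 4 statements merged into one kernel-verified Lean document; each statement's English description precedes it below -/
import Mathlib

section
/- In the braid group B_n with band generator presentation, for all band generators (i,j) with n ≥ i > j ≥ 1, conjugation by the braid δ = (n,n-1)(n-1,n-2)···(2,1) satisfies δ^{-1}(i,j)δ = (i+1,j+1), where indices are taken modulo n (with representatives in {1,...,n}, and the pair reordered to be decreasing). -/
/-- Artin relations for the braid group `B_n`, with generators `σ_1, …, σ_{n-1}`
(indexed by natural numbers; generators with index `0` or `≥ n` are killed). -/
def braidRels (n : ℕ) : Set (FreeGroup ℕ) :=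
  {x | (∃ i j : ℕ, 1 ≤ i ∧ i + 2 ≤ j ∧ j + 1 ≤ n ∧
        x = FreeGroup.of i * FreeGroup.of j * (FreeGroup.of i)⁻¹ * (FreeGroup.of j)⁻¹) ∨
      (∃ i : ℕ, 1 ≤ i ∧ i + 2 ≤ n ∧
        x = FreeGroup.of i * FreeGroup.of (i+1) * FreeGroup.of i *
            (FreeGroup.of (i+1) * FreeGroup.of i * FreeGroup.of (i+1))⁻¹) ∨
      (∃ i : ℕ, (i = 0 ∨ n ≤ i) ∧ x = FreeGroup.of i)}

/-- The braid group `B_n` with the Artin presentation. -/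
def BraidGroup (n : ℕ) : Type := PresentedGroup (braidRels n)

instance (n : ℕ) : Group (BraidGroup n) :=
  inferInstanceAs (Group (PresentedGroup (braidRels n)))

/-- The Artin generator `σ_k` of `B_n`. -/
def σb (n k : ℕ) : BraidGroup n := PresentedGroup.of (rels := braidRels n) k

/-- The product `σ_{i-1} σ_{i-2} ⋯ σ_{j+1}` in `B_n`. -/
def chain (n i j : ℕ) : BraidGroup n :=
  ((List.range' (j+1) (i-1-j)).reverse.map (σb n)).prod

/-- The band generator `(i,j) = (σ_{i-1} ⋯ σ_{j+1}) σ_j (σ_{i-1} ⋯ σ_{j+1})⁻¹` of `B_n`. -/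
def band (n i j : ℕ) : BraidGroup n := chain n i j * σb n j * (chain n i j)⁻¹

/-- The braid `δ = σ_{n-1} σ_{n-2} ⋯ σ_1 = (n,n-1)(n-1,n-2)⋯(2,1)` in `B_n`. -/
def bdelta (n : ℕ) : BraidGroup n := ((List.range' 1 (n-1)).reverse.map (σb n)).prod

/-!
Write `D(k, b) = σ_{b+k-1} ⋯ σ_b` for descending products of Artin generators, so that
`(i,j) = D(i-1-j, j+1) σ_j D(i-1-j, j+1)⁻¹` and `δ = D(n-1, 1)`. Splitting `δ` as
`A σ_{k+1} σ_k B` with `A` and `B` commuting with `σ_k`, resp. `σ_{k+1}`, the braid relation gives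
`σ_k δ = δ σ_{k+1}` for `1 ≤ k ≤ n-2`; hence `δ⁻¹ (i,j) δ = (i+1,j+1)` whenever `i < n`.
For `i = n`, writing `δ = D(n-1-j, j+1) D(j, 1)` collapses `δ⁻¹ (n,j) δ` to
`D(j-1, 1)⁻¹ σ_j D(j-1, 1)`, the second standard expression of the band generator `(j+1, 1)`.
-/

namespace BraidGroup

variable {n : ℕ}

lemma σb_eq_one {k : ℕ} (hk : k = 0 ∨ n ≤ k) : σb n k = 1 :=
  (QuotientGroup.eq_one_iff _).mpr <|
    Subgroup.subset_normalClosure <| Or.inr <| Or.inr ⟨k, hk, rfl⟩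

lemma σb_braid {k : ℕ} (h1 : 1 ≤ k) (h2 : k + 2 ≤ n) :
    σb n k * σb n (k + 1) * σb n k = σb n (k + 1) * σb n k * σb n (k + 1) := by
  exact mul_inv_eq_one.mp <| (QuotientGroup.eq_one_iff _).mpr <|
    Subgroup.subset_normalClosure <| Or.inr <| Or.inl ⟨k, h1, h2, rfl⟩

lemma commute_σb {a b : ℕ} (h : a + 2 ≤ b) : Commute (σb n a) (σb n b) := by
  rcases Nat.eq_zero_or_pos a with ha | ha
  · rw [σb_eq_one (Or.inl ha)]
    exact Commute.one_left _
  rcases le_or_gt n b with hb | hb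
  · rw [σb_eq_one (Or.inr hb)]
    exact Commute.one_right _
  have hrel : σb n a * σb n b * (σb n a)⁻¹ * (σb n b)⁻¹ = 1 :=
    (QuotientGroup.eq_one_iff _).mpr <|
      Subgroup.subset_normalClosure <| Or.inl ⟨a, b, ha, h, hb, rfl⟩
  exact mul_inv_eq_one.mp (mul_inv_eq_one.mp hrel)

def descProd (n k b : ℕ) : BraidGroup n := ((List.range' b k).reverse.map (σb n)).prod

lemma chain_eq_descProd (i j : ℕ) : chain n i j = descProd n (i - 1 - j) (j + 1) := rfl

lemma bdelta_eq_descProd : bdelta n = descProd n (n - 1) 1 := rfl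

@[simp]
lemma descProd_zero (b : ℕ) : descProd n 0 b = 1 := rfl

lemma descProd_add (k l b : ℕ) : descProd n (k + l) b = descProd n l (b + k) * descProd n k b := by
  simp only [descProd, ← List.range'_append_1, List.reverse_append, List.map_append,
    List.prod_append]

lemma descProd_succ (k b : ℕ) : descProd n (k + 1) b = σb n (b + k) * descProd n k b := by
  rw [descProd_add]
  simp [descProd]

lemma commute_σb_descProd {m k b : ℕ} (h : m + 2 ≤ b ∨ b + k + 1 ≤ m) :
    Commute (σb n m) (descProd n k b) := by
  refine Commute.list_prod_right _ _ fun x hx => ?_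
  obtain ⟨l, hl, rfl⟩ := List.mem_map.mp hx
  rw [List.mem_reverse, List.mem_range'_1] at hl
  rcases h with h | h
  · exact commute_σb (by omega)
  · exact (commute_σb (by omega)).symm

lemma semiconjBy_descProd_σb {p b k : ℕ} (hb : b ≤ k) (hk : k + 2 ≤ b + p) (h1 : 1 ≤ k)
    (hn : k + 2 ≤ n) : SemiconjBy (descProd n p b) (σb n (k + 1)) (σb n k) := by
  obtain ⟨c, rfl⟩ := Nat.exists_eq_add_of_le hb
  obtain ⟨d, rfl⟩ : ∃ d, p = c + 2 + d := ⟨p - (c + 2), by omega⟩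
  have hsplit : descProd n (c + 2 + d) b =
      descProd n d (b + c + 2) * (σb n (b + c + 1) * σb n (b + c)) * descProd n c b := by
    rw [descProd_add, descProd_succ, descProd_succ, ← add_assoc, ← add_assoc]
    group
  have hA : Commute (σb n (b + c)) (descProd n d (b + c + 2)) := commute_σb_descProd (by omega)
  have hB : Commute (σb n (b + c + 1)) (descProd n c b) := commute_σb_descProd (by omega)
  rw [hsplit]
  refine SemiconjBy.mul_left (SemiconjBy.mul_left hA.symm ?_) hB.symm
  unfold SemiconjBy
  simp only [← mul_assoc, σb_braid h1 hn]

lemma semiconjBy_descProd_shift {g : BraidGroup n} {k b : ℕ}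
    (h : ∀ m, b ≤ m → m < b + k → SemiconjBy g (σb n (m + 1)) (σb n m)) :
    SemiconjBy g (descProd n k (b + 1)) (descProd n k b) := by
  induction k with
  | zero => exact SemiconjBy.one_right g
  | succ k ih =>
    rw [descProd_succ, descProd_succ, add_right_comm]
    exact (h _ (by omega) (by omega)).mul_right (ih fun m hm hmk => h m hm (by omega))

lemma semiconjBy_bdelta_σb {k : ℕ} (h1 : 1 ≤ k) (hn : k + 2 ≤ n) :
    SemiconjBy (bdelta n) (σb n (k + 1)) (σb n k) :=
  semiconjBy_descProd_σb h1 (by omega) h1 hn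

lemma semiconjBy_bdelta_band {i j : ℕ} (hj : 1 ≤ j) (hji : j < i) (hin : i < n) :
    SemiconjBy (bdelta n) (band n (i + 1) (j + 1)) (band n i j) := by
  have hC : SemiconjBy (bdelta n) (chain n (i + 1) (j + 1)) (chain n i j) := by
    rw [chain_eq_descProd, chain_eq_descProd, show i + 1 - 1 - (j + 1) = i - 1 - j by omega]
    exact semiconjBy_descProd_shift fun m hm hmk => semiconjBy_bdelta_σb (by omega) (by omega)
  exact (hC.mul_right (semiconjBy_bdelta_σb hj (by omega))).mul_right hC.inv_right

lemma descProd_inv_conj_σb {m : ℕ} (hm : m + 2 ≤ n) :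
    (descProd n m 1)⁻¹ * σb n (m + 1) * descProd n m 1 =
      descProd n m 2 * σb n 1 * (descProd n m 2)⁻¹ := by
  induction m with
  | zero => simp
  | succ m ih =>
    set s := σb n (m + 1)
    set t := σb n (m + 2)
    set D := descProd n m 1
    set E := descProd n m 2
    have hD : descProd n (m + 1) 1 = s * D := by rw [descProd_succ, add_comm]
    have hE : descProd n (m + 1) 2 = t * E := by rw [descProd_succ, add_comm]
    have hbraid : s⁻¹ * t * s = t * s * t⁻¹ := by
      have := σb_braid (n := n) (k := m + 1) (by omega) (by omega)
      calc s⁻¹ * t * s = s⁻¹ * (t * s * t) * t⁻¹ := by group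
        _ = s⁻¹ * (s * t * s) * t⁻¹ := by rw [← this]
        _ = t * s * t⁻¹ := by group
    have htD : Commute t D := commute_σb_descProd (by omega)
    rw [hD, hE]
    calc (s * D)⁻¹ * t * (s * D) = D⁻¹ * (s⁻¹ * t * s) * D := by group
      _ = D⁻¹ * (t * s * t⁻¹) * D := by rw [hbraid]
      _ = (D⁻¹ * t) * s * (t⁻¹ * D) := by group
      _ = (t * D⁻¹) * s * (D * t⁻¹) := by rw [← htD.inv_right.eq, htD.inv_left.eq]
      _ = t * (D⁻¹ * s * D) * t⁻¹ := by group
      _ = t * E * σb n 1 * (t * E)⁻¹ := by rw [ih (by omega)]; group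

lemma bdelta_inv_conj_band_self {j : ℕ} (hj : 1 ≤ j) (hjn : j < n) :
    (bdelta n)⁻¹ * band n n j * bdelta n = band n (j + 1) 1 := by
  have hD : descProd n j 1 = σb n j * descProd n (j - 1) 1 := by
    obtain ⟨a, rfl⟩ := Nat.exists_eq_add_of_le' hj
    rw [descProd_succ, add_comm 1 a, Nat.add_sub_cancel]
  have hδ : bdelta n = chain n n j * descProd n j 1 := by
    rw [bdelta_eq_descProd, chain_eq_descProd, add_comm j 1, ← descProd_add]
    congr 1
    omega
  have hband : band n (j + 1) 1 = descProd n (j - 1) 2 * σb n 1 * (descProd n (j - 1) 2)⁻¹ := by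
    rw [band, chain_eq_descProd, show j + 1 - 1 - 1 = j - 1 by omega]
  rw [hband, ← descProd_inv_conj_σb (by omega), Nat.sub_add_cancel hj, band, hδ, hD]
  group

end BraidGroup

open BraidGroup in
/-- conjugation by `δ` shifts band generators: `δ⁻¹ (i,j) δ = (i+1, j+1)`,
indices taken mod `n` with representatives in `{1,…,n}` and the pair reordered to be
decreasing (so for `i = n` the result is `(j+1, 1)`). -/
theorem delta_conj_band (n i j : ℕ) (hj : 1 ≤ j) (hji : j < i) (hin : i ≤ n) :
    (bdelta n)⁻¹ * band n i j * bdelta n =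
      if i < n then band n (i + 1) (j + 1) else band n (j + 1) 1 := by
  split_ifs with hi
  · rw [mul_assoc, ← (semiconjBy_bdelta_band hj hji hi).eq, inv_mul_cancel_left]
  · obtain rfl : i = n := by omega
    exact bdelta_inv_conj_band_self hj hji
end

section
/- In the band presentation of B_n, if pairs (i,j) and (k,l) with i>j and k>l are non-interlocking, i.e. (i-k)(i-l)(j-k)(j-l) > 0, then the band generators (i,j) and (k,l) commute. -/
/-!
Non-interlocking pairs are either disjoint (`l < k < j < i` up to symmetry) or nested
(`l < j < i < k` up to symmetry). Disjoint band generators are words in Artin generators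
at distance at least two, which commute. In the nested case, the braid relation shows that
conjugation by `c = σ_{k-1} ⋯ σ_{l+1}` sends `σ_{m+1}` to `σ_m` for `l < m < k - 1`; so
`(k,l) = c σ_l c⁻¹` and every `σ_m` with `j ≤ m < i` is `c σ_{m+1} c⁻¹`, and these commute
because `σ_l` and `σ_{m+1}` do.
-/

namespace BraidGroup

variable {n : ℕ}

lemma σb_commute {a b : ℕ} (hab : a + 2 ≤ b) : Commute (σb n a) (σb n b) := by
  rcases Nat.eq_zero_or_pos a with ha | ha
  · rw [σb_eq_one (Or.inl ha)]
    exact Commute.one_left _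
  rcases le_or_gt (b + 1) n with hb | hb
  · rw [← commutatorElement_eq_one_iff_commute]
    exact PresentedGroup.one_of_mem (Or.inl ⟨a, b, ha, hab, hb, rfl⟩)
  · rw [σb_eq_one (k := b) (Or.inr (by omega))]
    exact Commute.one_right _

lemma σb_braid_s1 {a : ℕ} (ha : 1 ≤ a) (han : a + 2 ≤ n) :
    σb n a * σb n (a + 1) * σb n a = σb n (a + 1) * σb n a * σb n (a + 1) :=
  mul_inv_eq_one.mp <| PresentedGroup.one_of_mem (Or.inr (Or.inl ⟨a, ha, han, rfl⟩))

lemma chain_succ {k j : ℕ} (h : j < k) : chain n (k + 1) j = σb n k * chain n k j := by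
  have hlen : k + 1 - 1 - j = (k - 1 - j) + 1 := by omega
  have hlast : j + 1 + 1 * (k - 1 - j) = k := by omega
  rw [chain, chain, hlen, List.range'_concat, hlast]
  simp

lemma commute_chain {i j : ℕ} {x : BraidGroup n}
    (H : ∀ m, j < m → m < i → Commute x (σb n m)) : Commute x (chain n i j) := by
  refine Commute.list_prod_right _ _ fun y hy => ?_
  obtain ⟨m, hm, rfl⟩ := List.mem_map.mp hy
  rw [List.mem_reverse, List.mem_range'_1] at hm
  exact H m (by omega) (by omega)

lemma commute_band {i j : ℕ} {x : BraidGroup n} (hji : j < i)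
    (H : ∀ m, j ≤ m → m < i → Commute x (σb n m)) : Commute x (band n i j) := by
  have hc : Commute x (chain n i j) := commute_chain fun m hjm hmi => H m hjm.le hmi
  exact (hc.mul_right (H j le_rfl hji)).mul_right hc.inv_right

lemma semiconjBy_chain {k l m : ℕ} (hlm : l < m) (hmk : m + 2 ≤ k) (hkn : k ≤ n) :
    SemiconjBy (chain n k l) (σb n (m + 1)) (σb n m) := by
  induction k, hmk using Nat.le_induction with
  | base =>
    rw [chain_succ (by omega), chain_succ hlm, ← mul_assoc]
    refine SemiconjBy.mul_left ?_
      (commute_chain fun p _ hpm => (σb_commute (by omega)).symm).symm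
    exact (mul_assoc _ _ _).symm.trans (σb_braid_s1 (by omega) hkn).symm
  | succ k hmk ih =>
    rw [chain_succ (by omega)]
    exact SemiconjBy.mul_left (σb_commute hmk).symm (ih (by omega))

lemma σb_commute_band {k l m : ℕ} (hlm : l < m) (hmk : m + 2 ≤ k) (hkn : k ≤ n) :
    Commute (σb n m) (band n k l) := by
  have hσ : σb n m = MulAut.conj (chain n k l) (σb n (m + 1)) :=
    eq_mul_inv_of_mul_eq (semiconjBy_chain hlm hmk hkn).symm
  rw [hσ, band, ← MulAut.conj_apply]
  exact (σb_commute (by omega)).symm.map _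

lemma band_commute_of_disjoint {i j k l : ℕ} (hji : j < i) (hlk : l < k) (hkj : k < j) :
    Commute (band n i j) (band n k l) :=
  commute_band hlk fun _ _ hmk =>
    (commute_band hji fun _ hjp _ => σb_commute (by omega)).symm

lemma band_commute_of_nested {i j k l : ℕ} (hlj : l < j) (hji : j < i) (hik : i < k)
    (hkn : k ≤ n) : Commute (band n i j) (band n k l) :=
  (commute_band hji fun _ hjm hmi => (σb_commute_band (by omega) (by omega) hkn).symm).symm

end BraidGroup

lemma nonInterlocking_cases {α : Type*} [CommRing α] [LinearOrder α] [IsStrictOrderedRing α]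
    {i j k l : α} (h : 0 < (i - k) * (i - l) * (j - k) * (j - l)) :
    k < j ∨ i < l ∨ (l < j ∧ i < k) ∨ (j < l ∧ k < i) := by
  by_contra! hc
  obtain ⟨hjk, hli, hnest, hnest'⟩ := hc
  rcases lt_trichotomy j l with hjl | rfl | hlj
  · nlinarith [mul_nonneg (mul_nonneg (sub_nonneg.2 (hnest' hjl)) (sub_nonneg.2 hli))
      (mul_nonneg (sub_nonneg.2 hjk) (sub_nonneg.2 hjl.le))]
  · simp at h
  · nlinarith [mul_nonneg (mul_nonneg (sub_nonneg.2 (hnest hlj)) (sub_nonneg.2 hli))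
      (mul_nonneg (sub_nonneg.2 hjk) (sub_nonneg.2 hlj.le))]

theorem band_comm_of_nonInterlocking_general (n i j k l : ℕ)
    (hji : j < i) (hin : i ≤ n)
    (hlk : l < k) (hkn : k ≤ n)
    (h : 0 < ((i : ℤ) - k) * ((i : ℤ) - l) * ((j : ℤ) - k) * ((j : ℤ) - l)) :
    band n i j * band n k l = band n k l * band n i j := by
  obtain hkj | hil | ⟨hlj, hik⟩ | ⟨hjl, hki⟩ := nonInterlocking_cases h
  · exact (BraidGroup.band_commute_of_disjoint hji hlk (by exact_mod_cast hkj)).eq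
  · exact (BraidGroup.band_commute_of_disjoint hlk hji (by exact_mod_cast hil)).symm.eq
  · exact (BraidGroup.band_commute_of_nested (by exact_mod_cast hlj) hji
      (by exact_mod_cast hik) hkn).eq
  · exact (BraidGroup.band_commute_of_nested (by exact_mod_cast hjl) hlk
      (by exact_mod_cast hki) hin).symm.eq

/-- non-interlocking band generators commute: if
`(i-k)(i-l)(j-k)(j-l) > 0` then `(i,j)(k,l) = (k,l)(i,j)` in `B_n`. -/
theorem band_comm_of_nonInterlocking (n i j k l : ℕ)
    (hj : 1 ≤ j) (hji : j < i) (hin : i ≤ n)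
    (hl : 1 ≤ l) (hlk : l < k) (hkn : k ≤ n)
    (h : 0 < ((i : ℤ) - k) * ((i : ℤ) - l) * ((j : ℤ) - k) * ((j : ℤ) - l)) :
    band n i j * band n k l = band n k l * band n i j :=
  band_comm_of_nonInterlocking_general n i j k l hji hin hlk hkn h
end

section
/- In B_n, the descending cycles satisfy δ_{i,j} δ_{h,k} = δ_{h-1,k-1} δ_{i,j} whenever i > h > k > j. -/
/-- The descending cycle `δ_{p,q} = (p,p-1)(p-1,p-2)⋯(q+1,q)` in `B_n`. -/
def descCycle (n p q : ℕ) : BraidGroup n :=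
  ((List.range' q (p - q)).reverse.map fun k => band n (k + 1) k).prod

/-! Each band `(k+1,k)` is just `σ_k`, so `δ_{p,q} = σ_{p-1} ⋯ σ_q`. Conjugation by `δ_{i,j}`
sends `σ_{s+1}` to `σ_s` whenever `j ≤ s ≤ i - 2`; applied factorwise to `δ_{h,k}` it therefore
lowers every index by one, giving `δ_{h-1,k-1}`. -/

lemma mk_eq_one_of_mem_braidRels {n : ℕ} {r : FreeGroup ℕ} (hr : r ∈ braidRels n) :
    (PresentedGroup.mk (braidRels n) r : BraidGroup n) = 1 :=
  (QuotientGroup.eq_one_iff r).2 (Subgroup.subset_normalClosure hr)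

lemma σb_eq_one {n k : ℕ} (hk : k = 0 ∨ n ≤ k) : σb n k = 1 :=
  mk_eq_one_of_mem_braidRels (Or.inr (Or.inr ⟨k, hk, rfl⟩))

lemma σb_commute {n a b : ℕ} (hab : a + 2 ≤ b) : Commute (σb n a) (σb n b) := by
  rcases Nat.eq_zero_or_pos a with ha | ha
  · simp [σb_eq_one (Or.inl ha)]
  rcases le_or_gt (b + 1) n with hb | hb
  · have h := mk_eq_one_of_mem_braidRels (n := n) (Or.inl ⟨a, b, ha, hab, hb, rfl⟩)
    simp only [map_mul, map_inv] at h
    exact mul_inv_eq_iff_eq_mul.1 (mul_inv_eq_one.1 h)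
  · simp [σb_eq_one (Or.inr (by omega : n ≤ b))]

lemma σb_braid {n a : ℕ} (ha : 1 ≤ a) (han : a + 2 ≤ n) :
    σb n a * σb n (a + 1) * σb n a = σb n (a + 1) * σb n a * σb n (a + 1) := by
  have h := mk_eq_one_of_mem_braidRels (n := n) (Or.inr (Or.inl ⟨a, ha, han, rfl⟩))
  simp only [map_mul, map_inv] at h
  exact mul_inv_eq_one.1 h

lemma band_succ_self (n k : ℕ) : band n (k + 1) k = σb n k := by
  simp [band, chain]

lemma descCycle_eq_prod (n p q : ℕ) :
    descCycle n p q = ((List.range' q (p - q)).reverse.map (σb n)).prod := by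
  simp only [descCycle, band_succ_self]

lemma descCycle_mul_descCycle {n p m q : ℕ} (hqm : q ≤ m) (hmp : m ≤ p) :
    descCycle n p m * descCycle n m q = descCycle n p q := by
  have hrange := List.range'_append_1 (s := q) (m := m - q) (n := p - m)
  rw [Nat.add_sub_cancel' hqm, show m - q + (p - m) = p - q by omega] at hrange
  rw [descCycle_eq_prod, descCycle_eq_prod, descCycle_eq_prod, ← List.prod_append,
    ← List.map_append, ← List.reverse_append, hrange]

lemma descCycle_add_two_self (n s : ℕ) : descCycle n (s + 2) s = σb n (s + 1) * σb n s := by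
  simp [descCycle_eq_prod, show s + 2 - s = 2 by omega, List.range'_succ]

lemma commute_σb_descCycle {n t p q : ℕ} (h : p + 1 ≤ t ∨ t + 2 ≤ q) :
    Commute (σb n t) (descCycle n p q) := by
  rw [descCycle_eq_prod]
  refine Commute.list_prod_right _ _ fun x hx => ?_
  obtain ⟨r, hr, rfl⟩ := List.mem_map.1 hx
  rw [List.mem_reverse, List.mem_range'_1] at hr
  rcases h with h | h
  · exact (σb_commute (by omega)).symm
  · exact σb_commute (by omega)

/-- Split `δ_{p,q} = δ_{p,s+2} σ_{s+1} σ_s δ_{s,q}`: the outer factors commute past `σ_s`,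
`σ_{s+1}` respectively, and the braid relation does the rest. -/
lemma descCycle_mul_σb_succ {n p q s : ℕ} (hq : 1 ≤ q) (hqs : q ≤ s) (hsp : s + 2 ≤ p)
    (hpn : p ≤ n) : descCycle n p q * σb n (s + 1) = σb n s * descCycle n p q := by
  have hsplit : descCycle n p q =
      descCycle n p (s + 2) * (σb n (s + 1) * σb n s) * descCycle n s q := by
    rw [← descCycle_add_two_self, descCycle_mul_descCycle (by omega) hsp,
      descCycle_mul_descCycle hqs (by omega)]
  have hlow := commute_σb_descCycle (n := n) (t := s + 1) (p := s) (q := q) (.inl le_rfl)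
  have hhigh := commute_σb_descCycle (n := n) (t := s) (p := p) (q := s + 2) (.inr le_rfl)
  have hbraid := σb_braid (n := n) (by omega : 1 ≤ s) (by omega)
  rw [hsplit]
  calc descCycle n p (s + 2) * (σb n (s + 1) * σb n s) * descCycle n s q * σb n (s + 1)
      = descCycle n p (s + 2) * (σb n (s + 1) * σb n s * σb n (s + 1)) * descCycle n s q := by
        simp only [mul_assoc, hlow.symm.eq]
    _ = σb n s * (descCycle n p (s + 2) * (σb n (s + 1) * σb n s)) * descCycle n s q := by
        rw [← hbraid]; simp only [← mul_assoc, hhigh.eq]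
    _ = _ := by simp only [mul_assoc]

lemma descCycle_conj_descCycle {n i j h k : ℕ} (hj : 1 ≤ j) (hjk : j < k) (hhi : h ≤ i)
    (hin : i ≤ n) :
    MulAut.conj (descCycle n i j) (descCycle n h k) = descCycle n (h - 1) (k - 1) := by
  have hσ : ∀ t ∈ (List.range' k (h - k)).reverse,
      MulAut.conj (descCycle n i j) (σb n t) = σb n (t - 1) := by
    intro t ht
    rw [List.mem_reverse, List.mem_range'_1] at ht
    rw [MulAut.conj_apply, mul_inv_eq_iff_eq_mul]
    obtain ⟨s, rfl⟩ : ∃ s, t = s + 1 := ⟨t - 1, by omega⟩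
    exact descCycle_mul_σb_succ hj (by omega) (by omega) hin
  have hmap : (List.range' k (h - k)).reverse.map (MulAut.conj (descCycle n i j) ∘ σb n) =
      ((List.range' k (h - k)).reverse.map (· - 1)).map (σb n) := by
    rw [List.map_map]
    exact List.map_congr_left hσ
  rw [descCycle_eq_prod n h k, descCycle_eq_prod n (h - 1) (k - 1), map_list_prod, List.map_map,
    hmap, List.map_reverse, List.map_sub_range' (by omega : 1 ≤ k)]
  congr 4
  omega

theorem descCycle_shift_general (n i j h k : ℕ)
    (hj : 1 ≤ j) (hjk : j < k) (hhi : h < i) (hin : i ≤ n) :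
    descCycle n i j * descCycle n h k = descCycle n (h - 1) (k - 1) * descCycle n i j := by
  rw [← descCycle_conj_descCycle hj hjk hhi.le hin, MulAut.conj_apply, inv_mul_cancel_right]

/-- `δ_{i,j} δ_{h,k} = δ_{h-1,k-1} δ_{i,j}` whenever `i > h > k > j`. -/
theorem descCycle_shift (n i j h k : ℕ)
    (hj : 1 ≤ j) (hjk : j < k) (hkh : k < h) (hhi : h < i) (hin : i ≤ n) :
    descCycle n i j * descCycle n h k = descCycle n (h - 1) (k - 1) * descCycle n i j :=
  descCycle_shift_general n i j h k hj hjk hhi hin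
end

section
/- Let W be a word in band generators of B_P of length P+N-1 whose induced permutation consists of one (P-N)-cycle and N fixed points (the conditions of an extended boundary word). If W contains two adjacent mutually inverse letters, then the freely reduced word W', regarded after deleting one unused index as a word in band generators of B_{P-1}, has length (P-1)+(N-1)-1 and induced permutation consisting of one (P-N)-cycle and N-1 fixed points. -/
/-!
The cancelling pair induces the square of a transposition, so the reduced word induces the
same permutation `π`. Since no remaining letter involves `m`, `π` fixes `m` and is the
extension along the order-preserving bijection `ℕ ≃ {a // a ≠ m}` of the permutation induced
by the renumbered word. Extension preserves being a cycle and matches moved points one to one;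
`m` itself is one of the `N` fixed points in `{1,…,P}`, which leaves `N - 1` of them.
-/

/-- The permutation induced by a word (list of letters, each letter already a
permutation): the strand convention applies the first letter first, so the word
`[w₁, …, w_m]` induces `w_m ∘ ⋯ ∘ w₁`. -/
def wordPerm (l : List (Equiv.Perm ℕ)) : Equiv.Perm ℕ := l.reverse.prod

/-- The transposition induced by the Artin generator `σ_k`. -/
def permσ (k : ℕ) : Equiv.Perm ℕ := Equiv.swap k (k + 1)

/-- The Artin word `(σ_{i-1} ⋯ σ_{j+1}) σ_j (σ_{i-1} ⋯ σ_{j+1})⁻¹` defining the band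
generator `(i,j)`, read letter by letter as transpositions (inverses of the
transpositions are themselves). -/
def bandWord (i j : ℕ) : List (Equiv.Perm ℕ) :=
  ((List.range' (j + 1) (i - 1 - j)).reverse.map permσ) ++ [permσ j] ++
    ((List.range' (j + 1) (i - 1 - j)).map permσ)

/-- The permutation induced by the band generator `(i,j)`. -/
def bandPerm (i j : ℕ) : Equiv.Perm ℕ := wordPerm (bandWord i j)

/-- The permutation induced by a signed word in band generators (signs are irrelevant
to the induced permutation). -/
def signedWordPerm (L : List ((ℕ × ℕ) × Bool)) : Equiv.Perm ℕ :=
  wordPerm (L.map fun x => Equiv.swap x.1.1 x.1.2)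

/-- `π` consists of one `(P-N)`-cycle and `N` fixed points on `{1,…,P}`. -/
def CycleCond (P N : ℕ) (π : Equiv.Perm ℕ) : Prop :=
  π.IsCycle ∧ (∀ x : ℕ, π x ≠ x → x ∈ Finset.Icc 1 P) ∧
    ((Finset.Icc 1 P).filter fun x => π x ≠ x).card = P - N

/-- Renumbering of indices after deleting the index `m`: indices above `m` drop by 1. -/
def dropIdx (m a : ℕ) : ℕ := if m < a then a - 1 else a

open Finset Equiv Equiv.Perm

namespace Equiv.Perm

variable {α β : Type*} {p : β → Prop} [DecidablePred p]

theorem extendDomain_swap [DecidableEq α] [DecidableEq β] (f : α ≃ Subtype p) (x y : α) :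
    (swap x y).extendDomain f = swap (f x : β) (f y) := by
  ext b
  by_cases hb : p b
  · obtain ⟨a, rfl⟩ : ∃ a, (f a : β) = b := ⟨f.symm ⟨b, hb⟩, by simp⟩
    rw [extendDomain_apply_image]
    exact ((Subtype.val_injective.comp f.injective).swap_apply x y a).symm
  · rw [extendDomain_apply_not_subtype _ _ hb,
      swap_apply_of_ne_of_ne (fun h : b = _ => hb (h ▸ (f x).2))
        (fun h : b = _ => hb (h ▸ (f y).2))]

theorem extendDomain_apply_image_ne_self_iff {g : Perm α} (f : α ≃ Subtype p) (a : α) :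
    g.extendDomain f (f a) ≠ f a ↔ g a ≠ a := by
  rw [extendDomain_apply_image, Ne, Subtype.coe_inj, f.injective.eq_iff]

theorem IsCycle.of_extendDomain {g : Perm α} {f : α ≃ Subtype p}
    (h : (g.extendDomain f).IsCycle) : g.IsCycle := by
  obtain ⟨b, hb, hcyc⟩ := h
  have hpb : p b := of_not_not fun h => hb (extendDomain_apply_not_subtype _ _ h)
  obtain ⟨a, rfl⟩ : ∃ a, (f a : β) = b := ⟨f.symm ⟨b, hpb⟩, by simp⟩
  refine ⟨a, (extendDomain_apply_image_ne_self_iff f a).1 hb, fun c hc => ?_⟩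
  exact sameCycle_extendDomain.1 (hcyc ((extendDomain_apply_image_ne_self_iff f c).2 hc))

end Equiv.Perm

def liftIdx (m y : ℕ) : ℕ := if m ≤ y then y + 1 else y

section Renumbering

variable {m : ℕ}

theorem dropIdx_liftIdx (m y : ℕ) : dropIdx m (liftIdx m y) = y := by
  unfold dropIdx liftIdx; split <;> split <;> omega

theorem liftIdx_ne (m y : ℕ) : liftIdx m y ≠ m := by
  unfold liftIdx; split <;> omega

theorem liftIdx_dropIdx {a : ℕ} (h : a ≠ m) : liftIdx m (dropIdx m a) = a := by
  unfold dropIdx liftIdx; split <;> split <;> omega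

theorem liftIdx_mem_Icc_iff {P y : ℕ} (hm1 : 1 ≤ m) (hm2 : m ≤ P) :
    liftIdx m y ∈ Icc 1 P ↔ y ∈ Icc 1 (P - 1) := by
  simp only [mem_Icc, liftIdx]; split <;> omega

theorem dropIdx_bounds {P i j : ℕ} (hm1 : 1 ≤ m) (hm2 : m ≤ P) (hj : 1 ≤ j) (hji : j < i)
    (hiP : i ≤ P) (him : i ≠ m) (hjm : j ≠ m) :
    1 ≤ dropIdx m j ∧ dropIdx m j < dropIdx m i ∧ dropIdx m i ≤ P - 1 := by
  unfold dropIdx; split <;> split <;> omega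

def skipEquiv (m : ℕ) : ℕ ≃ {a : ℕ // a ≠ m} where
  toFun y := ⟨liftIdx m y, liftIdx_ne m y⟩
  invFun a := dropIdx m a
  left_inv := dropIdx_liftIdx m
  right_inv a := Subtype.ext (liftIdx_dropIdx a.2)

theorem coe_skipEquiv_dropIdx {a : ℕ} (h : a ≠ m) : (skipEquiv m (dropIdx m a) : ℕ) = a :=
  liftIdx_dropIdx h

end Renumbering

theorem signedWordPerm_cons (x : (ℕ × ℕ) × Bool) (L : List ((ℕ × ℕ) × Bool)) :
    signedWordPerm (x :: L) = signedWordPerm L * swap x.1.1 x.1.2 := by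
  simp [signedWordPerm, wordPerm]

theorem signedWordPerm_append_cancel (A B : List ((ℕ × ℕ) × Bool)) (g : ℕ × ℕ)
    (b b' : Bool) :
    signedWordPerm (A ++ [(g, b), (g, b')] ++ B) = signedWordPerm (A ++ B) := by
  simp [signedWordPerm, wordPerm]

theorem extendDomain_signedWordPerm_map_dropIdx {m : ℕ} {L : List ((ℕ × ℕ) × Bool)}
    (hL : ∀ x ∈ L, x.1.1 ≠ m ∧ x.1.2 ≠ m) :
    (signedWordPerm (L.map fun x => ((dropIdx m x.1.1, dropIdx m x.1.2), x.2))).extendDomain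
      (skipEquiv m) = signedWordPerm L := by
  induction L with
  | nil => simp [signedWordPerm, wordPerm]
  | cons x L ih =>
    obtain ⟨h1, h2⟩ := hL x List.mem_cons_self
    rw [List.map_cons, signedWordPerm_cons, signedWordPerm_cons, ← extendDomain_mul,
      ih fun y hy => hL y (List.mem_cons_of_mem _ hy), extendDomain_swap,
      coe_skipEquiv_dropIdx h1, coe_skipEquiv_dropIdx h2]

theorem CycleCond.one_le_of_apply_eq_self {P N m : ℕ} {π : Perm ℕ} (h : CycleCond P N π)
    (hm : m ∈ Icc 1 P) (hπm : π m = m) : 1 ≤ N := by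
  have hsub : (Icc 1 P).filter (fun x => π x ≠ x) ⊆ (Icc 1 P).erase m := fun x hx =>
    mem_erase.2 ⟨fun he => (mem_filter.1 hx).2 (he ▸ hπm), (mem_filter.1 hx).1⟩
  have hcard := card_le_card hsub
  rw [card_erase_of_mem hm, Nat.card_Icc, h.2.2] at hcard
  have := mem_Icc.1 hm
  omega

theorem CycleCond.of_extendDomain_skipEquiv {P N m : ℕ} (hm1 : 1 ≤ m) (hm2 : m ≤ P)
    {σ : Perm ℕ} (h : CycleCond P N (σ.extendDomain (skipEquiv m))) :
    CycleCond (P - 1) (N - 1) σ := by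
  set π := σ.extendDomain (skipEquiv m)
  have hπm : π m = m := extendDomain_apply_not_subtype _ _ (not_not.2 rfl)
  have hmoved (y : ℕ) : π (liftIdx m y) ≠ liftIdx m y ↔ σ y ≠ y :=
    extendDomain_apply_image_ne_self_iff (skipEquiv m) y
  have hfilter : (Icc 1 P).filter (fun x => π x ≠ x) =
      ((Icc 1 (P - 1)).filter fun y => σ y ≠ y).map
        ⟨liftIdx m, Subtype.val_injective.comp (skipEquiv m).injective⟩ := by
    ext x
    simp only [mem_filter, mem_map]
    constructor
    · rintro ⟨hx, hπx⟩
      have hxm : x ≠ m := fun he => hπx (he ▸ hπm)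
      refine ⟨dropIdx m x, ?_, liftIdx_dropIdx hxm⟩
      rw [← liftIdx_mem_Icc_iff hm1 hm2, ← hmoved, liftIdx_dropIdx hxm]
      exact ⟨hx, hπx⟩
    · rintro ⟨y, ⟨hy, hσy⟩, rfl⟩
      exact ⟨(liftIdx_mem_Icc_iff hm1 hm2).2 hy, (hmoved y).2 hσy⟩
  have hN := h.one_le_of_apply_eq_self (mem_Icc.2 ⟨hm1, hm2⟩) hπm
  obtain ⟨hcyc, hsupp, hcard⟩ := h
  refine ⟨hcyc.of_extendDomain, fun y hy => ?_, ?_⟩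
  · exact (liftIdx_mem_Icc_iff hm1 hm2).1 (hsupp _ ((hmoved y).2 hy))
  · rw [hfilter, card_map] at hcard
    omega

/-- let `W` be a word in band generators of `B_P` of length `P+N-1`
whose induced permutation is one `(P-N)`-cycle with `N` fixed points, containing two
adjacent mutually inverse letters `(g,b)(g,!b)`. Then the freely reduced word,
regarded after deleting an unused index `m` (renumbering all larger indices down by
one) as a word in band generators of `B_{P-1}`, has length `(P-1)+(N-1)-1` and induced
permutation one `(P-N)`-cycle with `N-1` fixed points. -/
theorem free_reduction (P N : ℕ) (A B : List ((ℕ × ℕ) × Bool)) (g : ℕ × ℕ) (b : Bool)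
    (m : ℕ)
    (hval : ∀ x ∈ A ++ [(g, b), (g, !b)] ++ B, 1 ≤ x.1.2 ∧ x.1.2 < x.1.1 ∧ x.1.1 ≤ P)
    (hlen : (A ++ [(g, b), (g, !b)] ++ B).length = P + N - 1)
    (hcyc : CycleCond P N (signedWordPerm (A ++ [(g, b), (g, !b)] ++ B)))
    (hm1 : 1 ≤ m) (hm2 : m ≤ P)
    (hunused : ∀ x ∈ A ++ B, x.1.1 ≠ m ∧ x.1.2 ≠ m) :
    ((A ++ B).map fun x => ((dropIdx m x.1.1, dropIdx m x.1.2), x.2)).length =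
        (P - 1) + (N - 1) - 1 ∧
      (∀ x ∈ (A ++ B).map fun x => ((dropIdx m x.1.1, dropIdx m x.1.2), x.2),
        1 ≤ x.1.2 ∧ x.1.2 < x.1.1 ∧ x.1.1 ≤ P - 1) ∧
      CycleCond (P - 1) (N - 1)
        (signedWordPerm ((A ++ B).map fun x => ((dropIdx m x.1.1, dropIdx m x.1.2), x.2))) := by
  rw [signedWordPerm_append_cancel, ← extendDomain_signedWordPerm_map_dropIdx hunused] at hcyc
  have hN : 1 ≤ N := hcyc.one_le_of_apply_eq_self (mem_Icc.2 ⟨hm1, hm2⟩)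
    (extendDomain_apply_not_subtype _ _ (not_not.2 rfl))
  refine ⟨?_, ?_, hcyc.of_extendDomain_skipEquiv hm1 hm2⟩
  · simp only [List.length_map, List.length_append, List.length_cons, List.length_nil] at hlen ⊢
    omega
  · simp only [List.mem_map]
    rintro _ ⟨x, hx, rfl⟩
    obtain ⟨hj, hji, hiP⟩ := hval x (by simp only [List.mem_append] at hx ⊢; tauto)
    exact dropIdx_bounds hm1 hm2 hj hji hiP (hunused x hx).1 (hunused x hx).2
end
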